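/- arXiv:1808.08134 — 2 statements merged into one kernel-verified Lean document; each statement's English description precedes it below -/
import Mathlib

section
/- Let d ≥ 1, 1 < p < p_*, v ∈ ℝ^d with |v| < 1, and ω ≥ 0. Let Q ∈ H^{1/2}(ℝ^d) ∩ L^{p+1}(ℝ^d) be a weak solution of √(−Δ)Q + i v·∇Q + ωQ − |Q|^{p−1}Q = 0, and set u(t) = e^{iωt} Q(· − vt) ∈ H^{1/2}(ℝ^d) for t ∈ ℝ. If there exists φ ∈ H^{1/2}(ℝ^d) with lim_{t→+∞} ‖u(t) − e^{−it√(−Δ)}φ‖_{H^{1/2}} = 0, then φ = 0 and Q = 0 almost everywhere. The analogous statement holds for t → −∞. -/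
noncomputable section

open MeasureTheory Filter Complex
open scoped RealInnerProductSpace ENNReal

abbrev Ed (d : ℕ) := EuclideanSpace ℝ (Fin d)

/-- Fourier integral with the normalization `(2π)^{-d/2} ∫ e^{-i x·ξ} f(x) dx`. -/
def FT {d : ℕ} (f : Ed d → ℂ) (ξ : Ed d) : ℂ :=
  (((2 * Real.pi) ^ (-(d : ℝ) / 2) : ℝ) : ℂ) *
    ∫ x : Ed d, Complex.exp (-Complex.I * (⟪x, ξ⟫ : ℂ)) * f x

/-- `fhat` is the Fourier–Plancherel transform of `f ∈ L²(ℝ^d)`, characterized by duality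
against Schwartz functions. -/
structure IsFT {d : ℕ} (f fhat : Ed d → ℂ) : Prop where
  memL2 : MemLp f 2 (volume : Measure (Ed d))
  memL2_hat : MemLp fhat 2 (volume : Measure (Ed d))
  duality : ∀ g : SchwartzMap (Ed d) ℂ,
    ∫ ξ : Ed d, fhat ξ * g ξ = ∫ x : Ed d, f x * FT (fun y => g y) x

/-- `f ∈ H^{1/2}(ℝ^d)` with (Plancherel) Fourier transform `fhat`. -/
def H12 {d : ℕ} (f fhat : Ed d → ℂ) : Prop :=
  IsFT f fhat ∧ Integrable (fun ξ : Ed d => (1 + ‖ξ‖) * ‖fhat ξ‖ ^ 2) volume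

/-- `Q ∈ H^{1/2} ∩ L^{p+1}` is a weak solution of `√(-Δ) Q + i v·∇Q + ω Q - |Q|^{p-1} Q = 0`. -/
def IsWeakSolHW {d : ℕ} (p : ℝ) (v : Ed d) (ω : ℝ) (Q Qhat : Ed d → ℂ) : Prop :=
  H12 Q Qhat ∧ MemLp Q (ENNReal.ofReal (p + 1)) volume ∧
  ∀ φ φhat : Ed d → ℂ, H12 φ φhat → MemLp φ (ENNReal.ofReal (p + 1)) volume →
    ∫ ξ : Ed d, ((‖ξ‖ - ⟪v, ξ⟫ + ω : ℝ) : ℂ) * starRingEnd ℂ (φhat ξ) * Qhat ξ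
      = ∫ x : Ed d, starRingEnd ℂ (φ x) * ((‖Q x‖ ^ (p - 1) : ℝ) : ℂ) * Q x

/-- The squared `H^{1/2}`-distance at time `t` between the traveling solitary wave
`e^{iωt}Q(· - vt)` and the free half-wave `e^{-it√(-Δ)}φ`, computed in Fourier variables:
the Fourier transform of `e^{iωt}Q(· - vt)` is `e^{i(ωt - t v·ξ)}Q̂(ξ)` and that of
`e^{-it√(-Δ)}φ` is `e^{-it|ξ|}φ̂(ξ)`. -/
def scatDistSq {d : ℕ} (v : Ed d) (ω : ℝ) (Qhat φhat : Ed d → ℂ) (t : ℝ) : ℝ :=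
  ∫ ξ : Ed d, (1 + ‖ξ‖) *
    ‖Complex.exp (Complex.I * ((ω * t - t * ⟪v, ξ⟫ : ℝ) : ℂ)) * Qhat ξ
      - Complex.exp (-Complex.I * ((t * ‖ξ‖ : ℝ) : ℂ)) * φhat ξ‖ ^ 2

open scoped Topology FourierTransform

/-!
In Fourier variables the `H^{1/2}` distance between `e^{iωt}Q(· - vt)` and `e^{-it√(-Δ)}φ` is
the distance between `e^{itΛ}Q̂` and `φ̂` in `L²((1 + |ξ|) dξ)`, where `Λ(ξ) = ω - v·ξ + |ξ|`
vanishes only at `ξ = 0` because `|v| < 1` and `ω ≥ 0`. If `e^{itΛ}Q̂ → φ̂`, then also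
`e^{i(t+s)Λ}Q̂ → φ̂`, so the `t`-independent norm of `(e^{isΛ} - 1)Q̂` is zero for every `s`.
Since `Λ ≠ 0` almost everywhere this forces `Q̂ = 0`, and symmetrically `φ̂ = 0`; injectivity of
the Fourier transform then gives `Q = φ = 0`.
-/

lemma FT_eq_fourier {d : ℕ} (f : Ed d → ℂ) (ξ : Ed d) :
    FT f ξ = (((2 * Real.pi) ^ (-(d : ℝ) / 2) : ℝ) : ℂ) * 𝓕 f ((2 * Real.pi)⁻¹ • ξ) := by
  rw [FT, Real.fourier_eq']
  congr 1
  refine integral_congr_ae (.of_forall fun x => ?_)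
  simp only [real_inner_smul_right, smul_eq_mul]
  congr 2
  push_cast
  field_simp

lemma exists_schwartz_FT_eq {d : ℕ} (h : SchwartzMap (Ed d) ℂ) :
    ∃ g : SchwartzMap (Ed d) ℂ, ∀ ξ, FT (fun y => g y) ξ = h ξ := by
  have hc : (2 * Real.pi) ^ (-(d : ℝ) / 2) ≠ 0 := (Real.rpow_pos_of_pos Real.two_pi_pos _).ne'
  set D : Ed d ≃L[ℝ] Ed d :=
    ContinuousLinearEquiv.smulLeft (Units.mk0 (2 * Real.pi) Real.two_pi_pos.ne')
  refine ⟨𝓕⁻ (((((2 * Real.pi) ^ (-(d : ℝ) / 2))⁻¹ : ℝ) : ℂ) •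
    SchwartzMap.compCLMOfContinuousLinearEquiv ℂ D h), fun ξ => ?_⟩
  rw [FT_eq_fourier, ← SchwartzMap.fourier_coe, FourierTransform.fourier_fourierInv_eq]
  simp only [smul_apply, SchwartzMap.compCLMOfContinuousLinearEquiv_apply,
    Function.comp_apply, D, ContinuousLinearEquiv.smulLeft_apply_apply, Units.smul_mk0, smul_smul,
    mul_inv_cancel₀ Real.two_pi_pos.ne', one_smul, smul_eq_mul, ← mul_assoc, ← Complex.ofReal_mul,
    mul_inv_cancel₀ hc, Complex.ofReal_one, one_mul]

lemma ae_eq_zero_of_forall_integral_mul_schwartz_eq_zero {E : Type*} [NormedAddCommGroup E]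
    [NormedSpace ℝ E] [FiniteDimensional ℝ E] [MeasurableSpace E] [BorelSpace E] {μ : Measure E}
    {f : E → ℂ} (hf : LocallyIntegrable f μ) (h : ∀ g : SchwartzMap E ℂ, ∫ x, f x * g x ∂μ = 0) :
    f =ᵐ[μ] 0 := by
  refine ae_eq_zero_of_integral_contDiff_smul_eq_zero hf fun g hg hgc => ?_
  have hgc' : HasCompactSupport (Complex.ofRealCLM ∘ g) := hgc.comp_left rfl
  rw [← h (hgc'.toSchwartzMap (by fun_prop))]
  simp only [Complex.real_smul, mul_comm]
  rfl

lemma IsFT.ae_eq_zero_of_ae_eq_zero {d : ℕ} {f fhat : Ed d → ℂ} (hf : IsFT f fhat)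
    (h0 : fhat =ᵐ[volume] 0) : f =ᵐ[volume] 0 := by
  refine ae_eq_zero_of_forall_integral_mul_schwartz_eq_zero
    (hf.memL2.locallyIntegrable one_le_two) fun h => ?_
  obtain ⟨g, hg⟩ := exists_schwartz_FT_eq h
  calc ∫ x, f x * h x = ∫ x, f x * FT (fun y => g y) x := by simp only [hg]
    _ = ∫ ξ, fhat ξ * g ξ := (hf.duality g).symm
    _ = 0 := integral_eq_zero_of_ae (by filter_upwards [h0] with ξ hξ; simp [hξ])

section ModulatedDistance

variable {α : Type*} [MeasurableSpace α] {μ : Measure α} {w Λ : α → ℝ} {q f : α → ℂ}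

def modulatedDistSq (μ : Measure α) (w Λ : α → ℝ) (q f : α → ℂ) (t : ℝ) : ℝ :=
  ∫ x, w x * ‖exp (I * ↑(t * Λ x)) * q x - f x‖ ^ 2 ∂μ

lemma modulatedDistSq_neg_time (t : ℝ) :
    modulatedDistSq μ w Λ q f (-t) = modulatedDistSq μ w (-Λ) q f t := by
  simp only [modulatedDistSq, Pi.neg_apply, neg_mul, mul_neg]

lemma modulatedDistSq_comm (t : ℝ) :
    modulatedDistSq μ w Λ q f t = modulatedDistSq μ w (-Λ) f q t := by
  refine integral_congr_ae (.of_forall fun x => ?_)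
  have hrot : exp (I * ↑(t * -Λ x)) * f x - q x
      = -exp (I * ↑(t * -Λ x)) * (exp (I * ↑(t * Λ x)) * q x - f x) := by
    rw [neg_mul, mul_sub, ← mul_assoc, ← Complex.exp_add]
    push_cast
    ring_nf
    simp
  simp only [Pi.neg_apply, hrot, norm_mul, norm_neg, Complex.norm_exp_I_mul_ofReal, one_mul]

lemma norm_sub_sq_le {E : Type*} [SeminormedAddCommGroup E] (a b : E) :
    ‖a - b‖ ^ 2 ≤ 2 * (‖a‖ ^ 2 + ‖b‖ ^ 2) :=
  (pow_le_pow_left₀ (norm_nonneg _) (norm_sub_le a b) 2).trans add_sq_le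

lemma integrable_modulatedDistSq_integrand (hw : ∀ x, 0 ≤ w x) (hwm : Measurable w)
    (hΛm : Measurable Λ) (hqm : AEStronglyMeasurable q μ) (hfm : AEStronglyMeasurable f μ)
    (hq : Integrable (fun x => w x * ‖q x‖ ^ 2) μ) (hf : Integrable (fun x => w x * ‖f x‖ ^ 2) μ)
    (t : ℝ) : Integrable (fun x => w x * ‖exp (I * ↑(t * Λ x)) * q x - f x‖ ^ 2) μ := by
  refine ((hq.add hf).const_mul 2).mono' ?_ (.of_forall fun x => ?_)
  · have : Continuous fun r : ℝ => exp (I * ↑(t * r)) := by fun_prop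
    exact hwm.aestronglyMeasurable.mul
      ((((this.comp_aestronglyMeasurable hΛm.aestronglyMeasurable).mul hqm).sub hfm).norm.pow 2)
  · have := norm_sub_sq_le (exp (I * ↑(t * Λ x)) * q x) (f x)
    rw [norm_mul, Complex.norm_exp_I_mul_ofReal, one_mul] at this
    rw [Real.norm_eq_abs, abs_of_nonneg (mul_nonneg (hw x) (sq_nonneg _))]
    simp only [Pi.add_apply]
    nlinarith [hw x]

lemma norm_exp_sub_one_mul_eq (s t r : ℝ) (a b : ℂ) :
    ‖(exp (I * ↑(s * r)) - 1) * a‖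
      = ‖(exp (I * ↑((t + s) * r)) * a - b) - (exp (I * ↑(t * r)) * a - b)‖ := by
  rw [← one_mul ‖_ * a‖, ← Complex.norm_exp_I_mul_ofReal (t * r), ← norm_mul]
  congr 1
  push_cast
  rw [add_mul, mul_add, Complex.exp_add]
  ring

lemma ae_exp_sub_one_mul_eq_zero_of_tendsto (hw : ∀ x, 0 < w x) (hwm : Measurable w)
    (hΛm : Measurable Λ) (hqm : AEStronglyMeasurable q μ) (hfm : AEStronglyMeasurable f μ)
    (hq : Integrable (fun x => w x * ‖q x‖ ^ 2) μ) (hf : Integrable (fun x => w x * ‖f x‖ ^ 2) μ)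
    (h : Tendsto (modulatedDistSq μ w Λ q f) atTop (𝓝 0)) (s : ℝ) :
    ∀ᵐ x ∂μ, (exp (I * ↑(s * Λ x)) - 1) * q x = 0 := by
  set G := fun x => w x * ‖(exp (I * ↑(s * Λ x)) - 1) * q x‖ ^ 2
  have hint := integrable_modulatedDistSq_integrand (fun x => (hw x).le) hwm hΛm hqm hfm hq hf
  have hG_le : ∀ t x, G x ≤ 2 * (w x * ‖exp (I * ↑((t + s) * Λ x)) * q x - f x‖ ^ 2)
      + 2 * (w x * ‖exp (I * ↑(t * Λ x)) * q x - f x‖ ^ 2) := fun t x => by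
    simp only [G, norm_exp_sub_one_mul_eq s t (Λ x) (q x) (f x)]
    nlinarith [norm_sub_sq_le (exp (I * ↑((t + s) * Λ x)) * q x - f x)
      (exp (I * ↑(t * Λ x)) * q x - f x), hw x]
  have hG_nonneg : 0 ≤ G := fun x => mul_nonneg (hw x).le (sq_nonneg _)
  have hG_int : Integrable G μ := by
    refine (((hint s).const_mul 2).add ((hint 0).const_mul 2)).mono' ?_ (.of_forall fun x => ?_)
    · have : Continuous fun r : ℝ => exp (I * ↑(s * r)) - 1 := by fun_prop
      exact hwm.aestronglyMeasurable.mul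
        (((this.comp_aestronglyMeasurable hΛm.aestronglyMeasurable).mul hqm).norm.pow 2)
    · rw [Real.norm_eq_abs, abs_of_nonneg (hG_nonneg x)]
      simpa using hG_le 0 x
  have hG_bound : ∀ t, ∫ x, G x ∂μ ≤ 2 * modulatedDistSq μ w Λ q f (t + s)
      + 2 * modulatedDistSq μ w Λ q f t := fun t => by
    simp only [modulatedDistSq]
    rw [← integral_const_mul, ← integral_const_mul, ← integral_add]
    · exact integral_mono hG_int ((((hint _).const_mul 2).add ((hint _).const_mul 2))) (hG_le t)
    · exact (hint _).const_mul 2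
    · exact (hint _).const_mul 2
  have hlim : Tendsto (fun t => 2 * modulatedDistSq μ w Λ q f (t + s)
      + 2 * modulatedDistSq μ w Λ q f t) atTop (𝓝 0) := by
    simpa using ((h.comp (tendsto_atTop_add_const_right _ s tendsto_id)).const_mul 2).add
      (h.const_mul 2)
  have hG_zero : ∫ x, G x ∂μ = 0 :=
    le_antisymm (ge_of_tendsto' hlim hG_bound) (integral_nonneg hG_nonneg)
  filter_upwards [(integral_eq_zero_iff_of_nonneg hG_nonneg hG_int).1 hG_zero] with x hx
  have := (mul_eq_zero.1 hx).resolve_left (hw x).ne'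
  simpa using this

/-- Testing only rational `s` keeps the exceptional null sets countable; continuity in `s` then
gives `e^{isΛ(x)} = 1` for all real `s`, which fails at `s = π / Λ(x)`. -/
lemma ae_eq_zero_of_forall_ae_exp_sub_one_mul_eq_zero (hΛ : ∀ᵐ x ∂μ, Λ x ≠ 0)
    (h : ∀ s : ℝ, ∀ᵐ x ∂μ, (exp (I * ↑(s * Λ x)) - 1) * q x = 0) : q =ᵐ[μ] 0 := by
  have hrat : ∀ᵐ x ∂μ, ∀ r : ℚ, (exp (I * ↑(r * Λ x)) - 1) * q x = 0 :=
    ae_all_iff.2 fun r => h r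
  filter_upwards [hΛ, hrat] with x hx hxr
  by_contra hqx
  have hone : (fun s : ℝ => exp (I * ↑(s * Λ x))) = fun _ => 1 :=
    Continuous.ext_on Rat.denseRange_cast (by fun_prop) continuous_const
      (by rintro _ ⟨r, rfl⟩; exact sub_eq_zero.1 ((mul_eq_zero.1 (hxr r)).resolve_right hqx))
  have hpi := congrFun hone (Real.pi / Λ x)
  rw [div_mul_cancel₀ _ hx, mul_comm, Complex.exp_pi_mul_I] at hpi
  norm_num at hpi

theorem ae_eq_zero_of_tendsto_modulatedDistSq (hw : ∀ x, 0 < w x) (hwm : Measurable w)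
    (hΛm : Measurable Λ) (hΛ : ∀ᵐ x ∂μ, Λ x ≠ 0)
    (hqm : AEStronglyMeasurable q μ) (hfm : AEStronglyMeasurable f μ)
    (hq : Integrable (fun x => w x * ‖q x‖ ^ 2) μ) (hf : Integrable (fun x => w x * ‖f x‖ ^ 2) μ)
    (h : Tendsto (modulatedDistSq μ w Λ q f) atTop (𝓝 0)) : q =ᵐ[μ] 0 ∧ f =ᵐ[μ] 0 := by
  refine ⟨ae_eq_zero_of_forall_ae_exp_sub_one_mul_eq_zero hΛ
    (ae_exp_sub_one_mul_eq_zero_of_tendsto hw hwm hΛm hqm hfm hq hf h), ?_⟩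
  have h' : Tendsto (modulatedDistSq μ w (-Λ) f q) atTop (𝓝 0) := by
    rwa [show modulatedDistSq μ w (-Λ) f q = modulatedDistSq μ w Λ q f from
      funext fun t => (modulatedDistSq_comm t).symm]
  exact ae_eq_zero_of_forall_ae_exp_sub_one_mul_eq_zero (by simpa using hΛ)
    (ae_exp_sub_one_mul_eq_zero_of_tendsto hw hwm hΛm.neg hfm hqm hf hq h')

end ModulatedDistance

/-- `e^{itΛ(ξ)}` is the ratio of the Fourier multiplier of the traveling wave to that of the free
half-wave. -/
def relPhase {d : ℕ} (v : Ed d) (ω : ℝ) (ξ : Ed d) : ℝ :=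
  ω - ⟪v, ξ⟫ + ‖ξ‖

lemma relPhase_pos {d : ℕ} {v : Ed d} (hv : ‖v‖ < 1) {ω : ℝ} (hω : 0 ≤ ω) {ξ : Ed d}
    (hξ : ξ ≠ 0) : 0 < relPhase v ω ξ := by
  have : ‖v‖ * ‖ξ‖ < ‖ξ‖ := mul_lt_of_lt_one_left (norm_pos_iff.2 hξ) hv
  linarith [real_inner_le_norm v ξ, show relPhase v ω ξ = ω - ⟪v, ξ⟫ + ‖ξ‖ from rfl]

lemma continuous_relPhase {d : ℕ} (v : Ed d) (ω : ℝ) : Continuous (relPhase v ω) := by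
  unfold relPhase
  fun_prop

lemma scatDistSq_eq_modulatedDistSq {d : ℕ} (v : Ed d) (ω : ℝ) (Qhat φhat : Ed d → ℂ) :
    scatDistSq v ω Qhat φhat
      = modulatedDistSq volume (fun ξ => 1 + ‖ξ‖) (relPhase v ω) Qhat φhat := by
  ext t
  refine integral_congr_ae (.of_forall fun ξ => ?_)
  have hrot : exp (I * ↑(t * relPhase v ω ξ)) * Qhat ξ - φhat ξ
      = exp (I * ↑(t * ‖ξ‖)) * (exp (I * ↑(ω * t - t * ⟪v, ξ⟫)) * Qhat ξ
        - exp (-I * ↑(t * ‖ξ‖)) * φhat ξ) := by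
    rw [mul_sub, ← mul_assoc, ← mul_assoc, ← Complex.exp_add, ← Complex.exp_add, relPhase]
    push_cast
    ring_nf
    simp
  simp only [hrot, norm_mul, Complex.norm_exp_I_mul_ofReal, one_mul]

theorem traveling_wave_no_scattering_general
    (d : ℕ) (hd : 1 ≤ d) (p : ℝ)
    (v : Ed d) (hv : ‖v‖ < 1) (ω : ℝ) (hω : 0 ≤ ω)
    (Q Qhat : Ed d → ℂ) (hsol : IsWeakSolHW p v ω Q Qhat)
    (φ φhat : Ed d → ℂ) (hφ : H12 φ φhat)
    (hconv : Filter.Tendsto (scatDistSq v ω Qhat φhat) Filter.atTop (nhds 0) ∨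
             Filter.Tendsto (scatDistSq v ω Qhat φhat) Filter.atBot (nhds 0)) :
    φ =ᵐ[volume] 0 ∧ Q =ᵐ[volume] 0 := by
  obtain ⟨⟨hQ, hQint⟩, -⟩ := hsol
  obtain ⟨hφ, hφint⟩ := hφ
  have : Nontrivial (Ed d) :=
    Module.nontrivial_of_finrank_pos (R := ℝ) (by rw [finrank_euclideanSpace_fin]; exact hd)
  have hrel : ∀ᵐ ξ : Ed d, relPhase v ω ξ ≠ 0 := by
    filter_upwards [Measure.ae_ne volume 0] with ξ hξ using (relPhase_pos hv hω hξ).ne'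
  obtain ⟨Λ, hΛm, hΛ, hconv⟩ : ∃ Λ : Ed d → ℝ, Measurable Λ ∧ (∀ᵐ ξ : Ed d, Λ ξ ≠ 0) ∧
      Tendsto (modulatedDistSq volume (fun ξ => 1 + ‖ξ‖) Λ Qhat φhat) atTop (𝓝 0) := by
    rw [scatDistSq_eq_modulatedDistSq] at hconv
    rcases hconv with hconv | hconv
    · exact ⟨_, (continuous_relPhase v ω).measurable, hrel, hconv⟩
    · refine ⟨_, (continuous_relPhase v ω).measurable.neg, by simpa using hrel, ?_⟩
      simpa only [Function.comp_def, modulatedDistSq_neg_time] using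
        hconv.comp tendsto_neg_atTop_atBot
  obtain ⟨hQhat, hφhat⟩ := ae_eq_zero_of_tendsto_modulatedDistSq (fun ξ => by positivity)
    (by fun_prop) hΛm hΛ hQ.memL2_hat.aestronglyMeasurable hφ.memL2_hat.aestronglyMeasurable
    hQint hφint hconv
  exact ⟨hφ.ae_eq_zero_of_ae_eq_zero hφhat, hQ.ae_eq_zero_of_ae_eq_zero hQhat⟩

/-- A nontrivial traveling solitary wave `u(t) = e^{iωt}Q(· - vt)` with
`|v| < 1`, `ω ≥ 0` cannot scatter to a free half-wave: if
`‖u(t) - e^{-it√(-Δ)}φ‖_{H^{1/2}} → 0` as `t → +∞` (or `t → -∞`) for some `φ ∈ H^{1/2}`,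
then `φ = 0` and `Q = 0`. -/
theorem traveling_wave_no_scattering
    (d : ℕ) (hd : 1 ≤ d) (p : ℝ) (hp : 1 < p)
    (hpstar : 2 ≤ d → p < ((d : ℝ) + 1) / ((d : ℝ) - 1))
    (v : Ed d) (hv : ‖v‖ < 1) (ω : ℝ) (hω : 0 ≤ ω)
    (Q Qhat : Ed d → ℂ) (hsol : IsWeakSolHW p v ω Q Qhat)
    (φ φhat : Ed d → ℂ) (hφ : H12 φ φhat)
    (hconv : Filter.Tendsto (scatDistSq v ω Qhat φhat) Filter.atTop (nhds 0) ∨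
             Filter.Tendsto (scatDistSq v ω Qhat φhat) Filter.atBot (nhds 0)) :
    φ =ᵐ[volume] 0 ∧ Q =ᵐ[volume] 0 :=
  traveling_wave_no_scattering_general d hd p v hv ω hω Q Qhat hsol φ φhat hφ hconv
end
end

section
/- Let d ≥ 1 and let D ⊂ ℝ be a discrete set, i.e. every point of D is isolated in D. Suppose f ∈ L²(ℝ^d,ℂ) has finite Gagliardo H^{1/2}-seminorm, ∬_{ℝ^d×ℝ^d} |f(x)−f(y)|²/|x−y|^{d+1} dx dy < ∞, and satisfies |f(x)| ∈ D for almost every x ∈ ℝ^d. Then f = 0 almost everywhere. -/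
noncomputable section

open MeasureTheory Filter Complex
open scoped RealInnerProductSpace ENNReal

/-- Every point of `D` is isolated in `D`. -/
def DiscreteIn (D : Set ℝ) : Prop :=
  ∀ x ∈ D, ∃ ε > 0, ∀ y ∈ D, |y - x| < ε → y = x

/-!
If `f` is not a.e. zero, countability of `D` gives a level set `s = {‖f‖ = a}` with `a ≠ 0` and
`0 < |s| < ∞` (finite because `f ∈ L²`). As `a` is isolated in `D`, `f` jumps by some `ε > 0`
between `s` and its complement, so the seminorm is at least `ε² ∬_{s × sᶜ} |x - y|^{-(d+1)}`.
Putting `y = x + h`, this is `∫ |h|^{-(d+1)} |s \ (s - h)| dh`. The escape measure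
`h ↦ |s \ (s - h)|` is subadditive and bounded below for large `|h|` (little of `s` lies far out),
hence at least `c |h|` near `0`; since `|h|^{-d}` is not integrable at the origin, the seminorm
is infinite.
-/

open Metric Set Topology

theorem DiscreteIn.isDiscrete {D : Set ℝ} (hD : DiscreteIn D) : IsDiscrete D := by
  refine isDiscrete_iff_forall_mem_exists_isOpen.2 fun x hx => ?_
  obtain ⟨ε, hε, hiso⟩ := hD x hx
  refine ⟨ball x ε, isOpen_ball, subset_antisymm (fun y ⟨hyx, hyD⟩ => hiso y hyD hyx) ?_⟩
  rintro y rfl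
  exact ⟨mem_ball_self hε, hx⟩

theorem DiscreteIn.countable {D : Set ℝ} (hD : DiscreteIn D) : D.Countable :=
  (HereditarilyLindelofSpace.isLindelof D).countable_of_isDiscrete hD.isDiscrete

theorem exists_measure_norm_eq_ne_zero {α F : Type*} [MeasurableSpace α] {μ : Measure α}
    [NormedAddCommGroup F] {f : α → F} {S : Set ℝ} (hS : S.Countable)
    (hrange : ∀ᵐ x ∂μ, ‖f x‖ ∈ S) (hf : ¬ f =ᵐ[μ] 0) :
    ∃ a ∈ S, a ≠ 0 ∧ μ {x | ‖f x‖ = a} ≠ 0 := by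
  contrapose! hf
  have hlevel : ∀ᵐ x ∂μ, ∀ a ∈ S, a ≠ 0 → ‖f x‖ ≠ a :=
    (ae_ball_iff hS).2 fun a ha => by
      rcases eq_or_ne a 0 with rfl | h0
      · exact ae_of_all _ fun _ h => (h rfl).elim
      · filter_upwards [measure_eq_zero_iff_ae_notMem.1 (hf a ha h0)] with x hx _ using hx
  filter_upwards [hlevel, hrange] with x hx hxS
  by_contra hfx
  exact hx _ hxS (norm_ne_zero_iff.2 hfx) rfl

theorem MemLp.measure_norm_eq_ne_top {α F : Type*} [MeasurableSpace α] {μ : Measure α}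
    [NormedAddCommGroup F] {f : α → F} {p : ℝ≥0∞} (hf : MemLp f p μ) (hp0 : p ≠ 0)
    (hptop : p ≠ ∞) {a : ℝ} (ha : a ≠ 0) : μ {x | ‖f x‖ = a} ≠ ∞ := by
  rcases ha.lt_or_gt with ha | ha
  · have hempty : {x | ‖f x‖ = a} = ∅ :=
      eq_empty_of_forall_notMem fun x (hx : ‖f x‖ = a) => (norm_nonneg _).not_gt (hx ▸ ha)
    simp [hempty]
  · refine ne_top_of_le_ne_top (hf.meas_ge_lt_top hp0 hptop (ε := a.toNNReal) (by simpa)).ne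
      (measure_mono fun x (hx : ‖f x‖ = a) => ?_)
    exact Real.toNNReal_le_iff_le_coe.2 (by simp [hx])

section Group

variable {G : Type*} [AddCommGroup G] [MeasurableSpace G] (μ : Measure G)

def escapeMeasure (s : Set G) (h : G) : ℝ≥0∞ := μ (s \ (· + h) ⁻¹' s)

variable [MeasurableAdd G] [μ.IsAddRightInvariant]

theorem escapeMeasure_add_le (s : Set G) (h₁ h₂ : G) :
    escapeMeasure μ s (h₁ + h₂) ≤ escapeMeasure μ s h₁ + escapeMeasure μ s h₂ := by
  have hsub : s \ (· + (h₁ + h₂)) ⁻¹' s ⊆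
      (s \ (· + h₁) ⁻¹' s) ∪ (· + h₁) ⁻¹' (s \ (· + h₂) ⁻¹' s) := by
    rintro x ⟨hxs, hx⟩
    by_cases hx₁ : x + h₁ ∈ s
    · exact Or.inr ⟨hx₁, by simpa [add_assoc] using hx⟩
    · exact Or.inl ⟨hxs, hx₁⟩
  calc escapeMeasure μ s (h₁ + h₂) ≤ _ := measure_mono hsub
    _ ≤ _ := measure_union_le _ _
    _ = escapeMeasure μ s h₁ + escapeMeasure μ s h₂ := by
      rw [measure_preimage_add_right]; rfl

theorem escapeMeasure_nsmul_le (s : Set G) (h : G) (n : ℕ) :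
    escapeMeasure μ s (n • h) ≤ n * escapeMeasure μ s h := by
  induction n with
  | zero => simp [escapeMeasure]
  | succ n ih =>
    calc escapeMeasure μ s ((n + 1) • h) ≤ escapeMeasure μ s (n • h) + escapeMeasure μ s h := by
          rw [succ_nsmul]; exact escapeMeasure_add_le μ s _ _
      _ ≤ n * escapeMeasure μ s h + escapeMeasure μ s h := by gcongr
      _ = (n + 1 : ℕ) * escapeMeasure μ s h := by push_cast; ring

theorem setLIntegral_setLIntegral_compl_eq [MeasurableAdd₂ G] [SFinite μ] {s : Set G}
    (hs : MeasurableSet s) {K : G → ℝ≥0∞} (hK : Measurable K) :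
    ∫⁻ x in s, ∫⁻ y in sᶜ, K (y - x) ∂μ ∂μ = ∫⁻ h, K h * escapeMeasure μ s h ∂μ := by
  have hshift : ∀ x, ∫⁻ y in sᶜ, K (y - x) ∂μ =
      ∫⁻ h, ((· + h) ⁻¹' s)ᶜ.indicator (fun _ => K h) x ∂μ := by
    intro x
    rw [← lintegral_indicator hs.compl, ← lintegral_add_right_eq_self _ x]
    refine lintegral_congr fun h => ?_
    by_cases hx : x + h ∈ s <;> simp [hx, add_comm h x]
  have hmeas : Measurable (Function.uncurry fun x h =>
      ((· + h) ⁻¹' s)ᶜ.indicator (fun _ => K h) x) :=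
    (hK.comp measurable_snd).indicator (hs.preimage measurable_add).compl
  simp_rw [hshift]
  rw [lintegral_lintegral_swap hmeas.aemeasurable]
  refine lintegral_congr fun h => ?_
  rw [lintegral_indicator_const₀ (hs.preimage (measurable_add_const h)).compl.nullMeasurableSet,
    Measure.restrict_apply' hs, escapeMeasure, Set.sdiff_eq, inter_comm, mul_comm]

end Group

theorem tendsto_measure_sdiff_closedBall {X : Type*} [PseudoMetricSpace X] [MeasurableSpace X]
    [OpensMeasurableSpace X] {μ : Measure X} {s : Set X} (hs : NullMeasurableSet s μ)
    (hst : μ s ≠ ∞) (x : X) :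
    Tendsto (fun n : ℕ => μ (s \ closedBall x n)) atTop (𝓝 0) := by
  have hempty : ⋂ n : ℕ, s \ closedBall x n = ∅ := by
    refine eq_empty_of_forall_notMem fun y hy => ?_
    obtain ⟨n, hn⟩ := exists_nat_ge (dist y x)
    exact (mem_iInter.1 hy n).2 hn
  have hanti : Antitone fun n : ℕ => s \ closedBall x n := fun m n hmn =>
    sdiff_subset_sdiff_right (closedBall_subset_closedBall (Nat.cast_le.2 hmn))
  simpa [hempty, Function.comp_def] using tendsto_measure_iInter_atTop
    (fun n => hs.diff measurableSet_closedBall.nullMeasurableSet) hanti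
    ⟨0, ne_top_of_le_ne_top hst (measure_mono sdiff_subset)⟩

section Normed

variable {G : Type*} [NormedAddCommGroup G] [MeasurableSpace G] [MeasurableAdd G]
  (μ : Measure G) [μ.IsAddRightInvariant]

theorem exists_forall_le_norm_le_escapeMeasure [OpensMeasurableSpace G] {s : Set G}
    (hs : MeasurableSet s) (hs0 : μ s ≠ 0) (hst : μ s ≠ ∞) :
    ∃ c ≠ 0, ∃ T > 0, ∀ h : G, T ≤ ‖h‖ → c ≤ escapeMeasure μ s h := by
  have htail : Tendsto (fun n : ℕ => 2 * μ (s \ closedBall 0 n)) atTop (𝓝 0) := by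
    simpa using ENNReal.Tendsto.const_mul
      (tendsto_measure_sdiff_closedBall hs.nullMeasurableSet hst (0 : G))
      (Or.inr ENNReal.ofNat_ne_top)
  obtain ⟨R, hR⟩ := (htail.eventually_lt_const (pos_iff_ne_zero.2 hs0)).exists
  refine ⟨μ s - 2 * μ (s \ closedBall 0 R), (tsub_pos_of_lt hR).ne', 2 * R + 1, by positivity,
    fun h hh => ?_⟩
  have hsub : s ∩ (· + h) ⁻¹' s ⊆ (s \ closedBall 0 R) ∪ (· + h) ⁻¹' (s \ closedBall 0 R) := by
    rintro x ⟨hxs, hxhs⟩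
    by_cases hx : x ∈ closedBall (0 : G) R
    · refine Or.inr ⟨hxhs, fun hxh => ?_⟩
      rw [mem_closedBall_zero_iff] at hx hxh
      have : ‖h‖ ≤ ‖x + h‖ + ‖x‖ := by simpa using norm_sub_le (x + h) x
      linarith
    · exact Or.inl ⟨hxs, hx⟩
  have hinter : μ (s ∩ (· + h) ⁻¹' s) ≤ 2 * μ (s \ closedBall 0 R) :=
    calc μ (s ∩ (· + h) ⁻¹' s) ≤ _ := measure_mono hsub
      _ ≤ _ := measure_union_le _ _
      _ = 2 * μ (s \ closedBall 0 R) := by rw [measure_preimage_add_right, two_mul]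
  rw [tsub_le_iff_right]
  calc μ s = escapeMeasure μ s h + μ (s ∩ (· + h) ⁻¹' s) :=
        (measure_sdiff_add_inter (μ := μ) s
          (hs.preimage (measurable_add_const h))).symm
    _ ≤ escapeMeasure μ s h + 2 * μ (s \ closedBall 0 R) := by gcongr

theorem ofReal_norm_div_mul_le_escapeMeasure [NormedSpace ℝ G] {s : Set G} {c : ℝ≥0∞} {T : ℝ}
    (hT : 0 < T) (hfar : ∀ h : G, T ≤ ‖h‖ → c ≤ escapeMeasure μ s h) {h : G} (hh : ‖h‖ ≤ T) :
    ENNReal.ofReal (‖h‖ / (2 * T)) * c ≤ escapeMeasure μ s h := by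
  rcases eq_or_ne h 0 with rfl | h0
  · simp
  have hpos : 0 < ‖h‖ := norm_pos_iff.2 h0
  -- `n • h` with `n = ⌈T / ‖h‖⌉` has norm in `[T, 2T]`
  set n := ⌈T / ‖h‖⌉₊
  have hn_ge : T ≤ n * ‖h‖ := (div_le_iff₀ hpos).1 (Nat.le_ceil _)
  have hn_le : n * ‖h‖ ≤ 2 * T := by
    have hceil : (n : ℝ) < T / ‖h‖ + 1 := Nat.ceil_lt_add_one (by positivity)
    rw [← sub_lt_iff_lt_add, lt_div_iff₀ hpos, sub_mul, one_mul] at hceil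
    linarith
  have hc : c ≤ n * escapeMeasure μ s h :=
    (hfar _ (by rwa [RCLike.norm_nsmul ℝ, nsmul_eq_mul])).trans (escapeMeasure_nsmul_le μ s h n)
  calc ENNReal.ofReal (‖h‖ / (2 * T)) * c
      ≤ ENNReal.ofReal (‖h‖ / (2 * T)) * (n * escapeMeasure μ s h) := by gcongr
    _ = ENNReal.ofReal (n * ‖h‖ / (2 * T)) * escapeMeasure μ s h := by
      rw [← mul_assoc, ← ENNReal.ofReal_natCast, ← ENNReal.ofReal_mul (by positivity)]
      ring_nf
    _ ≤ 1 * escapeMeasure μ s h := by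
      gcongr
      exact ENNReal.ofReal_le_one.2 ((div_le_one (by positivity)).2 hn_le)
    _ = escapeMeasure μ s h := one_mul _

end Normed

section Energy

variable {E F : Type*} [NormedAddCommGroup E] [MeasurableSpace E] [NormedAddCommGroup F]
  (μ : Measure E)

def gagliardoEnergy (p : ℕ) (f : E → F) : ℝ≥0∞ :=
  ∫⁻ x, ∫⁻ y, ENNReal.ofReal (‖f x - f y‖ ^ 2 / ‖x - y‖ ^ p) ∂μ ∂μ

theorem gagliardoEnergy_congr_ae {p : ℕ} {f g : E → F} (hfg : f =ᵐ[μ] g) :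
    gagliardoEnergy μ p f = gagliardoEnergy μ p g := by
  refine lintegral_congr_ae ?_
  filter_upwards [hfg] with x hx
  refine lintegral_congr_ae ?_
  filter_upwards [hfg] with y hy
  rw [hx, hy]

theorem ofReal_sq_mul_le_gagliardoEnergy {p : ℕ} {f : E → F} {s : Set E} (hs : MeasurableSet s)
    {ε : ℝ} (hε : 0 ≤ ε) (hjump : ∀ x ∈ s, ∀ᵐ y ∂μ, y ∉ s → ε ≤ ‖f x - f y‖) :
    ENNReal.ofReal (ε ^ 2) * ∫⁻ x in s, ∫⁻ y in sᶜ, ENNReal.ofReal (‖y - x‖ ^ p)⁻¹ ∂μ ∂μ ≤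
      gagliardoEnergy μ p f := by
  rw [← lintegral_const_mul' _ _ ENNReal.ofReal_ne_top]
  refine (setLIntegral_mono' hs fun x hx => ?_).trans (setLIntegral_le_lintegral _ _)
  rw [← lintegral_const_mul' _ _ ENNReal.ofReal_ne_top]
  refine (setLIntegral_mono_ae' hs.compl ?_).trans (setLIntegral_le_lintegral _ _)
  filter_upwards [hjump x hx] with y hy hys
  rw [← ENNReal.ofReal_mul (by positivity), norm_sub_rev y x, ← div_eq_mul_inv]
  gcongr
  exact hy hys

end Energy

section FiniteDimensional

variable {E : Type*} [NormedAddCommGroup E] [NormedSpace ℝ E] [FiniteDimensional ℝ E]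
  [MeasurableSpace E] [BorelSpace E] (μ : Measure E) [μ.IsAddHaarMeasure]

theorem lintegral_inv_norm_pow_finrank_ball_eq_top (hdim : 1 ≤ Module.finrank ℝ E) {r : ℝ}
    (hr : 0 < r) :
    ∫⁻ x in ball 0 r, ENNReal.ofReal (‖x‖ ^ Module.finrank ℝ E)⁻¹ ∂μ = ∞ := by
  have : Nontrivial E := Module.nontrivial_of_finrank_pos (R := ℝ) hdim
  have hnot : ¬ IntegrableOn (fun x : E => (‖x‖ ^ Module.finrank ℝ E)⁻¹) (ball 0 r) μ := by
    rw [integrableOn_fun_norm_addHaar μ (f := fun y => (y ^ Module.finrank ℝ E)⁻¹)]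
    intro h
    have hinv : IntegrableOn (fun y : ℝ => y ^ (-1 : ℝ)) (Ioo 0 r) := by
      refine h.congr_fun (fun y (hy : 0 < y ∧ y < r) => ?_) measurableSet_Ioo
      obtain ⟨k, hk⟩ := Nat.exists_eq_add_of_le' hdim
      simp only [Real.rpow_neg_one, smul_eq_mul, hk, Nat.add_sub_cancel, pow_succ]
      field_simp [hy.1.ne']
    exact lt_irrefl _ ((intervalIntegral.integrableOn_Ioo_rpow_iff hr).1 hinv)
  by_contra hfin
  exact hnot ⟨by fun_prop, (hasFiniteIntegral_iff_ofReal (ae_of_all _ fun _ => by positivity)).2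
    (lt_top_iff_ne_top.2 hfin)⟩

theorem lintegral_inv_norm_pow_mul_escapeMeasure_eq_top (hdim : 1 ≤ Module.finrank ℝ E)
    {s : Set E} (hs : MeasurableSet s) (hs0 : μ s ≠ 0) (hst : μ s ≠ ∞) :
    ∫⁻ h, ENNReal.ofReal (‖h‖ ^ (Module.finrank ℝ E + 1))⁻¹ * escapeMeasure μ s h ∂μ = ∞ := by
  obtain ⟨c, hc0, T, hT, hfar⟩ := exists_forall_le_norm_le_escapeMeasure μ hs hs0 hst
  have hpt : ∀ h ∈ ball (0 : E) T, ENNReal.ofReal (2 * T)⁻¹ * c *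
      ENNReal.ofReal (‖h‖ ^ Module.finrank ℝ E)⁻¹ ≤
      ENNReal.ofReal (‖h‖ ^ (Module.finrank ℝ E + 1))⁻¹ * escapeMeasure μ s h := by
    intro h hh
    rcases eq_or_ne h 0 with rfl | h0
    · simp [zero_pow (Nat.one_le_iff_ne_zero.1 hdim)]
    have hpos : 0 < ‖h‖ := norm_pos_iff.2 h0
    have hid : (2 * T)⁻¹ * (‖h‖ ^ Module.finrank ℝ E)⁻¹ =
        (‖h‖ ^ (Module.finrank ℝ E + 1))⁻¹ * (‖h‖ / (2 * T)) := by
      field_simp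
      ring
    calc ENNReal.ofReal (2 * T)⁻¹ * c * ENNReal.ofReal (‖h‖ ^ Module.finrank ℝ E)⁻¹
        = ENNReal.ofReal ((2 * T)⁻¹ * (‖h‖ ^ Module.finrank ℝ E)⁻¹) * c := by
          rw [ENNReal.ofReal_mul (by positivity), mul_right_comm]
      _ = ENNReal.ofReal (‖h‖ ^ (Module.finrank ℝ E + 1))⁻¹ *
            (ENNReal.ofReal (‖h‖ / (2 * T)) * c) := by
          rw [hid, ENNReal.ofReal_mul (by positivity), mul_assoc]
      _ ≤ _ := by
          gcongr
          exact ofReal_norm_div_mul_le_escapeMeasure μ hT hfar (mem_ball_zero_iff.1 hh).le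
  rw [eq_top_iff]
  calc ∞ = ENNReal.ofReal (2 * T)⁻¹ * c *
        ∫⁻ h in ball 0 T, ENNReal.ofReal (‖h‖ ^ Module.finrank ℝ E)⁻¹ ∂μ := by
        rw [lintegral_inv_norm_pow_finrank_ball_eq_top μ hdim hT, ENNReal.mul_top]
        exact mul_ne_zero (by simpa using hT) hc0
    _ = ∫⁻ h in ball 0 T, ENNReal.ofReal (2 * T)⁻¹ * c *
        ENNReal.ofReal (‖h‖ ^ Module.finrank ℝ E)⁻¹ ∂μ := (lintegral_const_mul _ (by fun_prop)).symm
    _ ≤ ∫⁻ h in ball 0 T, ENNReal.ofReal (‖h‖ ^ (Module.finrank ℝ E + 1))⁻¹ *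
        escapeMeasure μ s h ∂μ := setLIntegral_mono' measurableSet_ball hpt
    _ ≤ _ := setLIntegral_le_lintegral _ _

theorem gagliardoEnergy_eq_top_of_jump (hdim : 1 ≤ Module.finrank ℝ E) {F : Type*}
    [NormedAddCommGroup F] {f : E → F} {s : Set E} (hs : MeasurableSet s) (hs0 : μ s ≠ 0)
    (hst : μ s ≠ ∞) {ε : ℝ} (hε : 0 < ε) (hjump : ∀ x ∈ s, ∀ᵐ y ∂μ, y ∉ s → ε ≤ ‖f x - f y‖) :
    gagliardoEnergy μ (Module.finrank ℝ E + 1) f = ∞ := by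
  have hle := ofReal_sq_mul_le_gagliardoEnergy μ (p := Module.finrank ℝ E + 1) hs hε.le hjump
  rw [setLIntegral_setLIntegral_compl_eq μ hs
      (K := fun h => ENNReal.ofReal (‖h‖ ^ (Module.finrank ℝ E + 1))⁻¹) (by fun_prop),
    lintegral_inv_norm_pow_mul_escapeMeasure_eq_top μ hdim hs hs0 hst,
    ENNReal.mul_top (by simpa using hε.ne')] at hle
  exact top_le_iff.1 hle

end FiniteDimensional

/-- An `L²` function with finite Gagliardo `H^{1/2}`-seminorm whose
modulus takes values (a.e.) in a discrete subset of `ℝ` vanishes a.e. -/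
theorem discrete_modulus_zero
    (d : ℕ) (hd : 1 ≤ d) (D : Set ℝ) (hD : DiscreteIn D)
    (f : Ed d → ℂ) (hf : MemLp f 2 (volume : Measure (Ed d)))
    (hsem : (∫⁻ x : Ed d, ∫⁻ y : Ed d,
        ENNReal.ofReal (‖f x - f y‖ ^ 2 / ‖x - y‖ ^ (d + 1)) ∂volume ∂volume) ≠ ⊤)
    (hrange : ∀ᵐ x : Ed d ∂volume, ‖f x‖ ∈ D) :
    f =ᵐ[volume] 0 := by
  by_contra hne
  obtain ⟨g, hg, hfg⟩ := hf.aestronglyMeasurable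
  have hrange_g : ∀ᵐ x ∂volume, ‖g x‖ ∈ D := by
    filter_upwards [hrange, hfg] with x hx hfgx
    rwa [← hfgx]
  obtain ⟨a, haD, ha0, hs0⟩ :=
    exists_measure_norm_eq_ne_zero hD.countable hrange_g fun hg0 => hne (hfg.trans hg0)
  obtain ⟨ε, hε, hiso⟩ := hD a haD
  have hjump : ∀ x ∈ {x | ‖g x‖ = a}, ∀ᵐ y ∂volume, y ∉ {x | ‖g x‖ = a} → ε ≤ ‖g x - g y‖ := by
    intro x (hx : ‖g x‖ = a)
    filter_upwards [hrange_g] with y hy (hya : ‖g y‖ ≠ a)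
    calc ε ≤ |‖g y‖ - ‖g x‖| := hx ▸ not_lt.1 fun h => hya (hiso _ hy h)
      _ ≤ ‖g y - g x‖ := abs_norm_sub_norm_le _ _
      _ = ‖g x - g y‖ := norm_sub_rev _ _
  have htop := gagliardoEnergy_eq_top_of_jump volume (by simpa using hd)
    (hg.norm.measurable (measurableSet_singleton a)) hs0
    (MemLp.measure_norm_eq_ne_top (hf.ae_eq hfg) two_ne_zero ENNReal.ofNat_ne_top ha0) hε hjump
  rw [finrank_euclideanSpace_fin, ← gagliardoEnergy_congr_ae volume hfg] at htop
  exact hsem htop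
end
end
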